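/- arXiv:1002.2781 — 2 statements merged into one kernel-verified Lean document; each statement's English description precedes it below -/
import Mathlib

section
/- Let Tr be the trace of a transient branching random walk on a graph G with bounded degrees. Then for every k ≥ 1, with positive probability Tr contains a line segment of length k, i.e., a path x_0, x_1, …, x_k in Tr with x_i ∼ x_{i+1} and such that the interior vertices x_1, …, x_{k−1} all have degree 2 in Tr. -/
open MeasureTheory Filter
open scoped ENNReal

/-- Canonical sample space for a branching random walk: each potential particle
(Ulam–Harris encoded as a `List ℕ`, child `i :: v` of `v`) carries a pair
(offspring number, uniform seed used for its random-walk step). -/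
abbrev BRWOmega : Type := List ℕ → ℕ × ℝ

/-- Offspring number of the particle `v`. -/
def offspring (ω : BRWOmega) (v : List ℕ) : ℕ := (ω v).1

/-- The particle `v` is alive (belongs to the family tree). -/
def alive (ω : BRWOmega) : List ℕ → Prop
  | [] => True
  | i :: v => i < offspring ω v ∧ alive ω v

/-- Degree of a vertex. -/
noncomputable def gdeg (G : SimpleGraph ℕ) (x : ℕ) : ℕ := (G.neighborSet x).ncard

/-- One step of simple random walk from `x`, using uniform seed `u ∈ (0,1)`:
choose the `⌊u · deg x⌋`-th neighbour of `x`. -/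
noncomputable def gstep (G : SimpleGraph ℕ) (x : ℕ) (u : ℝ) : ℕ :=
  Nat.nth (fun y => G.Adj x y) ⌊u * (gdeg G x : ℝ)⌋₊

/-- Position of particle `v` of the tree-indexed walk started at `o`. -/
noncomputable def pos (G : SimpleGraph ℕ) (o : ℕ) (ω : BRWOmega) : List ℕ → ℕ
  | [] => o
  | i :: v => gstep G (pos G o ω v) (ω (i :: v)).2

/-- `P` is the product of the probability measures `ν i` over the coordinates `i : ι`. -/
def IsProductWith {ι α : Type*} [MeasurableSpace α] (ν : ι → Measure α)
    (P : Measure (ι → α)) : Prop :=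
  IsProbabilityMeasure P ∧
    ∀ s : Finset ι,
      Measure.map (fun ω (i : s) => ω i) P = Measure.pi (fun i : s => ν i)

/-- The uniform measure on `(0,1)`. -/
noncomputable def unif01 : Measure ℝ := volume.restrict (Set.Ioo (0 : ℝ) 1)

/-- The law of one coordinate of the BRW randomness: offspring distribution `p`
together with an independent uniform seed. -/
noncomputable def coordLaw (p : PMF ℕ) : Measure (ℕ × ℝ) := (p.toMeasure).prod unif01

/-- The branching random walk started at `x` visits `x` infinitely often. -/
def VisitsInf (G : SimpleGraph ℕ) (x : ℕ) (ω : BRWOmega) : Prop :=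
  {v : List ℕ | alive ω v ∧ pos G x ω v = x}.Infinite

/-- Vertices visited by the BRW started at `o`. -/
def traceV (G : SimpleGraph ℕ) (o : ℕ) (ω : BRWOmega) : Set ℕ :=
  {x | ∃ v, alive ω v ∧ pos G o ω v = x}

/-- The trace of the BRW: the subgraph of all traversed edges. -/
def traceGraph (G : SimpleGraph ℕ) (o : ℕ) (ω : BRWOmega) : SimpleGraph ℕ where
  Adj x y := x ≠ y ∧ ∃ i v, alive ω (i :: v) ∧
      ((pos G o ω v = x ∧ pos G o ω (i :: v) = y) ∨
        (pos G o ω v = y ∧ pos G o ω (i :: v) = x))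
  symm := by
    refine ⟨?_⟩
    rintro x y ⟨hne, i, v, hv, hc⟩
    exact ⟨hne.symm, i, v, hv, hc.symm⟩
  loopless := by refine ⟨?_⟩; rintro x ⟨hne, -⟩; exact hne rfl

/-- `n`-step transition probabilities of the simple random walk. -/
noncomputable def pstep (G : SimpleGraph ℕ) : ℕ → ℕ → ℕ → ℝ
  | 0, x, y => if x = y then 1 else 0
  | n + 1, x, y => ∑' z : G.neighborSet x, (gdeg G x : ℝ)⁻¹ * pstep G n z y

/-- Spectral radius of the simple random walk on `G` (computed at base point `o`). -/
noncomputable def specRad (G : SimpleGraph ℕ) (o : ℕ) : ℝ :=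
  limsup (fun n : ℕ => (pstep G n o o) ^ ((n : ℝ)⁻¹)) atTop

/-- Transience of the simple random walk on `G` started at `o`:
summable return probabilities. -/
def SRWTransient (G : SimpleGraph ℕ) (o : ℕ) : Prop :=
  Summable fun n : ℕ => pstep G n o o

/-- The σ-algebra on (rooted, root `0`) graphs with vertex set `ℕ`, generated by the
adjacency events. -/
instance : MeasurableSpace (SimpleGraph ℕ) :=
  MeasurableSpace.generateFrom {S | ∃ x y : ℕ, S = {G : SimpleGraph ℕ | G.Adj x y}}

/-- Isomorphism invariance of a mass-transport function. -/
def IsoInvariant (f : SimpleGraph ℕ → ℕ → ℕ → ℝ≥0∞) : Prop :=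
  ∀ (G G' : SimpleGraph ℕ) (φ : G ≃g G') (x y : ℕ), f G' (φ x) (φ y) = f G x y

/-- A measure on rooted graphs (vertex set `ℕ`, root `0`) is unimodular if it satisfies the
Mass-Transport Principle for all measurable isomorphism-invariant functions. -/
def Unimodular (μ : Measure (SimpleGraph ℕ)) : Prop :=
  ∀ f : SimpleGraph ℕ → ℕ → ℕ → ℝ≥0∞,
    Measurable (fun q : SimpleGraph ℕ × ℕ × ℕ => f q.1 q.2.1 q.2.2) → IsoInvariant f →
      ∫⁻ G, ∑' x : ℕ, f G 0 x ∂μ = ∫⁻ G, ∑' x : ℕ, f G x 0 ∂μ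

/-- Standing assumptions on base graphs: infinite (automatic: vertex set `ℕ` and connected),
connected, and of bounded degree. -/
def GoodGraph (G : SimpleGraph ℕ) : Prop :=
  G.Connected ∧ (∀ x, (G.neighborSet x).Finite) ∧ ∃ D : ℕ, ∀ x, gdeg G x ≤ D


/-!
Transience gives, almost surely, only finitely many visits to each vertex, hence to each finite
ball; a deepest particle inside the ball of radius `k` around the root then starts a subtree
that never re-enters the ball. So for some vertex `s` at distance exactly `k` from the root, the
walk started at `s` stays outside the ball with positive probability. Fix `j > 0` with
`p j > 0` and a geodesic `g` from the root to `s`. With positive probability the first `k`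
generations form a `j`-ary tree whose particles of generation `m` all sit at `g m`, and every
particle of generation `k` starts a subtree staying outside the ball; on this event `g` is a
line segment of the trace. The requirements involve disjoint sets of independent coordinates.
Since the escape event of a subtree ignores the seed of its root, which is the seed forcing
the last step to `s`, independence is organised by half-coordinates: the offspring number and
the seed of each particle separately.
-/

open ProbabilityTheory

instance : IsProbabilityMeasure unif01 := ⟨by simp [unif01]⟩

instance (p : PMF ℕ) : IsProbabilityMeasure (coordLaw p) := by
  unfold coordLaw; infer_instance

noncomputable abbrev brwLaw (p : PMF ℕ) : Measure BRWOmega :=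
  Measure.infinitePi fun _ => coordLaw p

lemma IsProductWith.eq_infinitePi {ι α : Type*} [MeasurableSpace α] {ν : ι → Measure α}
    [∀ i, IsProbabilityMeasure (ν i)] {P : Measure (ι → α)} (hP : IsProductWith ν P) :
    P = Measure.infinitePi ν := by
  refine Measure.eq_infinitePi ν fun s t ht => ?_
  have hpre : (s : Set ι).pi t = (fun ω (i : s) => ω i) ⁻¹' Set.univ.pi fun i : s => t i := by
    ext ω; simp
  rw [hpre, ← Measure.map_apply (by fun_prop) (MeasurableSet.univ_pi fun i : s => ht i),
    hP.2 s, Measure.pi_pi, Finset.prod_coe_sort s fun i => ν i (t i)]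

lemma brwLaw_preimage_eval (p : PMF ℕ) (v : List ℕ) {A : Set (ℕ × ℝ)} (hA : MeasurableSet A) :
    brwLaw p {ω | ω v ∈ A} = coordLaw p A :=
  (measurePreserving_eval_infinitePi _ v).measure_preimage hA.nullMeasurableSet

lemma ae_offspring_pos {p : PMF ℕ} (hp0 : p 0 = 0) :
    ∀ᵐ ω ∂brwLaw p, ∀ v, 0 < offspring ω v := by
  refine ae_all_iff.2 fun v => ?_
  have h := brwLaw_preimage_eval p v ((measurableSet_singleton 0).prod MeasurableSet.univ)
  rw [coordLaw, Measure.prod_prod, PMF.toMeasure_apply_singleton _ _ (measurableSet_singleton 0),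
    hp0, zero_mul] at h
  refine measure_mono_null (fun ω hω => ?_) h
  simpa [offspring, Nat.pos_iff_ne_zero] using hω

lemma ae_seed_mem_Ioo (p : PMF ℕ) : ∀ᵐ ω ∂brwLaw p, ∀ v, (ω v).2 ∈ Set.Ioo (0 : ℝ) 1 := by
  refine ae_all_iff.2 fun v => ?_
  have h := brwLaw_preimage_eval p v
    (MeasurableSet.univ.prod (measurableSet_Ioo (a := (0 : ℝ)) (b := 1)).compl)
  rw [coordLaw, Measure.prod_prod, unif01, Measure.restrict_apply measurableSet_Ioo.compl,
    Set.compl_inter_self, measure_empty, mul_zero] at h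
  exact measure_mono_null (fun ω hω => by simpa using hω) h

lemma brwLaw_pi_pos (p : PMF ℕ) (t : Finset (List ℕ)) {A : List ℕ → Set ℕ} {B : List ℕ → Set ℝ}
    (hB : ∀ v, MeasurableSet (B v)) (hA : ∀ v ∈ t, 0 < p.toMeasure (A v))
    (hB' : ∀ v ∈ t, 0 < unif01 (B v)) :
    0 < brwLaw p ((t : Set (List ℕ)).pi fun v => A v ×ˢ B v) := by
  rw [Measure.infinitePi_pi _ fun v _ => MeasurableSet.of_discrete.prod (hB v)]
  exact CanonicallyOrderedAdd.prod_pos.2 fun v hv => by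
    rw [coordLaw, Measure.prod_prod]; exact ENNReal.mul_pos (hA v hv).ne' (hB' v hv).ne'

/-- The offspring number and the seed of a particle, both real-valued so that all
half-coordinates form a single family of random variables. -/
def coordPart : Fin 2 → ℕ × ℝ → ℝ := ![fun a => (a.1 : ℝ), Prod.snd]

@[fun_prop]
lemma measurable_coordPart (i : Fin 2) : Measurable (coordPart i) := by
  fin_cases i
  · exact (measurable_from_top (f := fun n : ℕ => (n : ℝ))).comp measurable_fst
  · exact measurable_snd

lemma iIndepFun_coordPart (μ : Measure ℕ) (ν : Measure ℝ) [IsProbabilityMeasure μ]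
    [IsProbabilityMeasure ν] : iIndepFun coordPart (μ.prod ν) := by
  have _ (i : Fin 2) : IsProbabilityMeasure ((μ.prod ν).map (coordPart i)) :=
    Measure.isProbabilityMeasure_map (by fun_prop)
  rw [iIndepFun_iff_map_fun_eq_infinitePi_map measurable_coordPart, Measure.infinitePi_eq_pi]
  apply (MeasurableEquiv.piFinTwo fun _ => ℝ).map_measurableEquiv_injective
  rw [(measurePreserving_piFinTwo _).map_eq, Measure.map_map (by fun_prop) (by fun_prop)]
  have h0 : (μ.prod ν).map (coordPart 0) = μ.map (fun n : ℕ => (n : ℝ)) := by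
    rw [show coordPart 0 = (fun n : ℕ => (n : ℝ)) ∘ Prod.fst from rfl,
      ← Measure.map_map (by fun_prop) measurable_fst, Measure.map_fst_prod, measure_univ, one_smul]
  have h1 : (μ.prod ν).map (coordPart 1) = ν := by
    rw [show coordPart 1 = Prod.snd from rfl, Measure.map_snd_prod, measure_univ, one_smul]
  rw [h0, h1, ← Measure.map_id (μ := ν), Measure.map_prod_map _ _ (by fun_prop) measurable_id,
    Measure.map_id]
  rfl

/-- `(v, 0)` is the offspring number of the particle `v`, `(v, 1)` its seed. -/
def halfCoord (q : List ℕ × Fin 2) (ω : BRWOmega) : ℝ := coordPart q.2 (ω q.1)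

@[fun_prop]
lemma measurable_halfCoord (q : List ℕ × Fin 2) : Measurable (halfCoord q) := by
  unfold halfCoord; fun_prop

lemma iIndepFun_halfCoord (p : PMF ℕ) : iIndepFun halfCoord (brwLaw p) := by
  refine iIndepFun_uncurry' (X := fun v i (ω : BRWOmega) => coordPart i (ω v))
    (fun _ _ => by fun_prop)
    (iIndepFun_infinitePi (X := fun _ a i => coordPart i a) fun _ => by fun_prop) fun v => ?_
  have hv := Measure.infinitePi_map_eval (fun _ : List ℕ => coordLaw p) v
  have _ (i : Fin 2) : IsProbabilityMeasure ((coordLaw p).map (coordPart i)) :=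
    Measure.isProbabilityMeasure_map (by fun_prop)
  have hpart := (iIndepFun_iff_map_fun_eq_infinitePi_map measurable_coordPart).1
    (iIndepFun_coordPart p.toMeasure unif01)
  have hmaps : ∀ i, (brwLaw p).map (fun ω : BRWOmega => coordPart i (ω v)) =
      (coordLaw p).map (coordPart i) := fun i => by
    rw [← hv, Measure.map_map (by fun_prop) (by fun_prop)]; rfl
  rw [iIndepFun_iff_map_fun_eq_infinitePi_map (by fun_prop), funext hmaps, coordLaw, ← hpart,
    ← coordLaw, ← hv, Measure.map_map (by fun_prop) (by fun_prop)]
  rfl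

abbrev halfSigma (S : Set (List ℕ × Fin 2)) : MeasurableSpace BRWOmega :=
  ⨆ q ∈ S, MeasurableSpace.comap (halfCoord q) inferInstance

lemma halfSigma_le (S : Set (List ℕ × Fin 2)) : halfSigma S ≤ MeasurableSpace.pi :=
  iSup₂_le fun q _ => (measurable_halfCoord q).comap_le

lemma halfSigma_mono {S T : Set (List ℕ × Fin 2)} (h : S ⊆ T) : halfSigma S ≤ halfSigma T :=
  iSup₂_mono' fun q hq => ⟨q, h hq, le_rfl⟩

lemma indep_halfSigma (p : PMF ℕ) {S T : Set (List ℕ × Fin 2)} (hST : Disjoint S T) :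
    Indep (halfSigma S) (halfSigma T) (brwLaw p) :=
  indep_iSup_of_disjoint (fun q => (measurable_halfCoord q).comap_le) (iIndepFun_halfCoord p) hST

lemma measure_biInter_halfSigma (p : PMF ℕ) {ι : Type*} {S : ι → Set (List ℕ × Fin 2)}
    {s : Finset ι} (hS : (s : Set ι).PairwiseDisjoint S) {E : ι → Set BRWOmega}
    (hE : ∀ i ∈ s, MeasurableSet[halfSigma (S i)] (E i)) :
    brwLaw p (⋂ i ∈ s, E i) = ∏ i ∈ s, brwLaw p (E i) := by
  classical
  induction s using Finset.induction_on with
  | empty => simp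
  | insert a s ha ih =>
    have hdisj : Disjoint (S a) (⋃ i ∈ s, S i) :=
      Set.disjoint_iUnion₂_right.2 fun i hi =>
        hS (Finset.mem_insert_self a s) (Finset.mem_insert_of_mem hi) (by rintro rfl; exact ha hi)
    have hmeas : MeasurableSet[halfSigma (⋃ i ∈ s, S i)] (⋂ i ∈ s, E i) :=
      Finset.measurableSet_biInter s fun i hi =>
        halfSigma_mono (Set.subset_biUnion_of_mem hi) _ (hE i (Finset.mem_insert_of_mem hi))
    rw [Finset.set_biInter_insert, Finset.prod_insert ha,
      (Indep_iff _ _ _).1 (indep_halfSigma p hdisj) _ _ (hE a (Finset.mem_insert_self a s)) hmeas,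
      ih (hS.subset (by simp)) fun i hi => hE i (Finset.mem_insert_of_mem hi)]

lemma measurable_seed_halfSigma {S : Set (List ℕ × Fin 2)} {v : List ℕ} (h : (v, 1) ∈ S) :
    Measurable[halfSigma S] fun ω : BRWOmega => (ω v).2 :=
  Measurable.of_comap_le (le_iSup₂ (f := fun q _ => MeasurableSpace.comap (halfCoord q) _) _ h)

lemma measurable_offspring_halfSigma {S : Set (List ℕ × Fin 2)} {v : List ℕ} (h : (v, 0) ∈ S) :
    Measurable[halfSigma S] fun ω : BRWOmega => (ω v).1 := by
  have hc : Measurable[halfSigma S] (halfCoord (v, 0)) :=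
    Measurable.of_comap_le (le_iSup₂ (f := fun q _ => MeasurableSpace.comap (halfCoord q) _) _ h)
  have : (fun ω : BRWOmega => (ω v).1) = fun ω => ⌊halfCoord (v, 0) ω⌋₊ := by
    funext ω; simp [halfCoord, coordPart]
  rw [this]
  exact Nat.measurable_floor.comp hc

lemma measurableSet_pi_halfSigma {S : Set (List ℕ × Fin 2)} (t : Finset (List ℕ))
    {A : List ℕ → Set ℕ} {B : List ℕ → Set ℝ} (hB : ∀ v, MeasurableSet (B v))
    (hS : ∀ v ∈ t, ((v, 0) ∈ S ∨ A v = Set.univ) ∧ ((v, 1) ∈ S ∨ B v = Set.univ)) :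
    MeasurableSet[halfSigma S] ((t : Set (List ℕ)).pi fun v => A v ×ˢ B v) := by
  rw [Set.pi_def]
  refine Finset.measurableSet_biInter t fun v hv => ?_
  change MeasurableSet[halfSigma S] ({ω : BRWOmega | (ω v).1 ∈ A v} ∩ {ω | (ω v).2 ∈ B v})
  refine .inter ?_ ?_
  · rcases (hS v hv).1 with h | h
    · exact measurable_offspring_halfSigma h MeasurableSet.of_discrete
    · simp [h]
  · rcases (hS v hv).2 with h | h
    · exact measurable_seed_halfSigma h (hB v)
    · simp [h]

lemma measurable_gstep_uncurry (G : SimpleGraph ℕ) :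
    Measurable fun q : ℕ × ℝ => gstep G q.1 q.2 :=
  measurable_from_prod_countable_right fun x =>
    (measurable_from_top (f := Nat.nth (G.Adj x))).comp
      (Nat.measurable_floor.comp (measurable_id.mul_const (gdeg G x : ℝ)))

lemma measurableSet_alive_halfSigma {S : Set (List ℕ × Fin 2)} {v : List ℕ}
    (h : ∀ i u, i :: u <:+ v → (u, 0) ∈ S) : MeasurableSet[halfSigma S] {ω | alive ω v} := by
  induction v with
  | nil => exact MeasurableSet.univ
  | cons i v ih =>
    exact (measurableSet_lt measurable_const (measurable_offspring_halfSigma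
      (h i v List.suffix_rfl))).inter (ih fun i' u hu => h i' u (hu.trans (List.suffix_cons i v)))

lemma measurable_pos_halfSigma {S : Set (List ℕ × Fin 2)} (G : SimpleGraph ℕ) (o : ℕ)
    {v : List ℕ} (h : ∀ i u, i :: u <:+ v → (i :: u, 1) ∈ S) :
    Measurable[halfSigma S] fun ω => pos G o ω v := by
  induction v with
  | nil => exact measurable_const
  | cons i v ih =>
    exact (measurable_gstep_uncurry G).comp
      ((ih fun i' u hu => h i' u (hu.trans (List.suffix_cons i v))).prodMk
        (measurable_seed_halfSigma (h i v List.suffix_rfl)))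

/-- The seed of the root is the one half-coordinate that no walk uses. -/
def rootless : Set (List ℕ × Fin 2) := {([], 1)}ᶜ

lemma measurableSet_alive_rootless (v : List ℕ) :
    MeasurableSet[halfSigma rootless] {ω | alive ω v} :=
  measurableSet_alive_halfSigma fun _ _ _ => by simp [rootless]

lemma measurable_pos_rootless (G : SimpleGraph ℕ) (o : ℕ) (v : List ℕ) :
    Measurable[halfSigma rootless] fun ω => pos G o ω v :=
  measurable_pos_halfSigma G o fun _ _ _ => by simp [rootless]

/-- The randomness of the subtree rooted at the particle `w`. -/
def subtreeShift (w : List ℕ) (ω : BRWOmega) : BRWOmega := fun v => ω (v ++ w)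

lemma measurePreserving_subtreeShift (p : PMF ℕ) (w : List ℕ) :
    MeasurePreserving (subtreeShift w) (brwLaw p) (brwLaw p) :=
  ⟨by unfold subtreeShift; fun_prop,
    Measure.map_infinitePi_infinitePi_of_inj (List.append_left_injective w)⟩

lemma measurable_subtreeShift_halfSigma (w : List ℕ) (S : Set (List ℕ × Fin 2)) :
    Measurable[halfSigma (Prod.map (· ++ w) id '' S), halfSigma S] (subtreeShift w) := by
  refine Measurable.of_comap_le ?_
  simp only [halfSigma, MeasurableSpace.comap_iSup, MeasurableSpace.comap_comp]
  exact iSup₂_le fun q hq =>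
    le_iSup₂ (f := fun q _ => MeasurableSpace.comap (halfCoord q) _) (Prod.map (· ++ w) id q)
      (Set.mem_image_of_mem _ hq)

lemma alive_of_alive_append {ω : BRWOmega} {u w : List ℕ} (h : alive ω (u ++ w)) : alive ω w := by
  induction u with
  | nil => exact h
  | cons i u ih => exact ih h.2

lemma alive_subtreeShift {ω : BRWOmega} {w : List ℕ} (hw : alive ω w) (u : List ℕ) :
    alive (subtreeShift w ω) u ↔ alive ω (u ++ w) := by
  induction u with
  | nil => exact iff_of_true trivial hw
  | cons i u ih => exact and_congr Iff.rfl ih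

lemma pos_subtreeShift (G : SimpleGraph ℕ) (o : ℕ) (ω : BRWOmega) (w u : List ℕ) :
    pos G (pos G o ω w) (subtreeShift w ω) u = pos G o ω (u ++ w) := by
  induction u with
  | nil => rfl
  | cons i u ih => simp only [pos, ih, List.cons_append, subtreeShift]

section Graph

variable {G : SimpleGraph ℕ} {x y : ℕ}

lemma gdeg_pos (hconn : G.Connected) (hfin : (G.neighborSet x).Finite) : 0 < gdeg G x := by
  obtain ⟨w⟩ := hconn.preconnected x (x + 1)
  obtain ⟨y, hy⟩ : ∃ y, G.Adj x y := by
    cases w with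
    | cons h _ => exact ⟨_, h⟩
  exact (Set.ncard_pos hfin).2 ⟨y, hy⟩

lemma card_toFinset_adj (hfin : (G.neighborSet x).Finite) :
    (show {y | G.Adj x y}.Finite from hfin).toFinset.card = gdeg G x :=
  (Set.ncard_eq_toFinset_card _ hfin).symm

lemma adj_gstep (hconn : G.Connected) (hfin : (G.neighborSet x).Finite) {r : ℝ}
    (hr : r ∈ Set.Ioo (0 : ℝ) 1) : G.Adj x (gstep G x r) := by
  have hd : (0 : ℝ) < gdeg G x := by exact_mod_cast gdeg_pos hconn hfin
  refine Nat.nth_mem_of_lt_card hfin ?_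
  rw [card_toFinset_adj hfin, Nat.floor_lt (mul_pos hr.1 hd).le]
  nlinarith [hr.2]

/-- The `l`-th neighbour of `x` is chosen exactly for seeds in `(l / deg x, (l + 1) / deg x)`. -/
lemma exists_seeds_gstep_eq (hfin : (G.neighborSet x).Finite) (hxy : G.Adj x y) :
    ∃ I : Set ℝ, MeasurableSet I ∧ 0 < unif01 I ∧ ∀ r ∈ I, gstep G x r = y := by
  classical
  set d := gdeg G x
  set l := Nat.count (G.Adj x) y
  have hld : l < d := by
    simp only [d, ← card_toFinset_adj hfin]; exact Nat.count_lt_card hfin hxy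
  have hd : (0 : ℝ) < d := by exact_mod_cast (Nat.zero_le l).trans_lt hld
  have hsub : Set.Ioo (l / d : ℝ) ((l + 1) / d) ⊆ Set.Ioo 0 1 := fun r hr =>
    ⟨(div_nonneg l.cast_nonneg hd.le).trans_lt hr.1,
      hr.2.trans_le ((div_le_one hd).2 (by exact_mod_cast hld))⟩
  refine ⟨Set.Ioo (l / d) ((l + 1) / d), measurableSet_Ioo, ?_, fun r hr => ?_⟩
  · rw [unif01, Measure.restrict_apply measurableSet_Ioo, Set.inter_eq_self_of_subset_left hsub,
      Real.volume_Ioo, ENNReal.ofReal_pos, ← sub_div]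
    exact div_pos (by linarith) hd
  · have h1 : (l : ℝ) < r * d := (div_lt_iff₀ hd).1 hr.1
    have h2 : r * d < l + 1 := (lt_div_iff₀ hd).1 hr.2
    rw [gstep, show ⌊r * (d : ℝ)⌋₊ = l from (Nat.floor_eq_iff (by linarith)).2 ⟨h1.le, h2⟩]
    exact Nat.nth_count hxy

lemma exists_seeds_along_walk (hfin : ∀ x, (G.neighborSet x).Finite) (γ : G.Walk x y) :
    ∃ I : ℕ → Set ℝ, (∀ m, MeasurableSet (I m)) ∧ (∀ m, 0 < unif01 (I m)) ∧
      ∀ m < γ.length, ∀ r ∈ I m, gstep G (γ.getVert m) r = γ.getVert (m + 1) := by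
  have h : ∀ m, ∃ I : Set ℝ, MeasurableSet I ∧ 0 < unif01 I ∧
      (m < γ.length → ∀ r ∈ I, gstep G (γ.getVert m) r = γ.getVert (m + 1)) := fun m => by
    by_cases hm : m < γ.length
    · obtain ⟨I, hI⟩ := exists_seeds_gstep_eq (hfin _) (γ.adj_getVert_succ hm)
      exact ⟨I, hI.1, hI.2.1, fun _ => hI.2.2⟩
    · exact ⟨Set.univ, .univ, by simp, fun h => absurd h hm⟩
  choose I hImeas hIpos hIforce using h
  exact ⟨I, hImeas, hIpos, hIforce⟩

lemma finite_setOf_dist_le (hconn : G.Connected) (hfin : ∀ x, (G.neighborSet x).Finite)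
    (o k : ℕ) : {y | G.dist o y ≤ k}.Finite := by
  induction k with
  | zero =>
    refine (Set.finite_singleton o).subset fun y hy => ?_
    rcases SimpleGraph.dist_eq_zero_iff_eq_or_not_reachable.1 (Nat.le_zero.1 hy) with h | h
    · exact h.symm
    · exact absurd (hconn.preconnected o y) h
  | succ k ih =>
    refine (ih.union (ih.biUnion fun x _ => hfin x)).subset fun y hy => ?_
    rcases (Nat.le_succ_iff.1 hy) with hle | heq
    · exact Or.inl hle
    obtain ⟨w, hw⟩ := hconn.exists_walk_length_eq_dist o y
    refine Or.inr (Set.mem_biUnion (x := w.getVert k) ?_ ?_)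
    · exact (SimpleGraph.dist_le (w.take k)).trans (by simp [w.take_length])
    · have := w.adj_getVert_succ (i := k) (by simp_all)
      rwa [show k + 1 = w.length by simp_all, w.getVert_length] at this

end Graph

lemma pos_eq_of_forced {G : SimpleGraph ℕ} {ω : BRWOmega} {f : ℕ → ℕ} {I : ℕ → Set ℝ} {n : ℕ}
    (hI : ∀ m < n, ∀ r ∈ I m, gstep G (f m) r = f (m + 1)) {U : Set (List ℕ)}
    (hU : ∀ i u, i :: u ∈ U → u ∈ U) (hseed : ∀ i u, i :: u ∈ U → (ω (i :: u)).2 ∈ I u.length)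
    {v : List ℕ} (hv : v ∈ U) (hvn : v.length ≤ n) : pos G (f 0) ω v = f v.length := by
  induction v with
  | nil => rfl
  | cons i u ih =>
    rw [List.length_cons] at hvn ⊢
    rw [pos, ih (hU i u hv) (by omega)]
    exact hI _ (by omega) _ (hseed i u hv)

abbrev spine (m : ℕ) : List ℕ := List.replicate m 0

lemma alive_spine {ω : BRWOmega} (h : ∀ v, 0 < offspring ω v) (m : ℕ) : alive ω (spine m) := by
  induction m with
  | zero => trivial
  | succ m ih => exact ⟨h _, ih⟩

lemma pos_spine_of_forced {G : SimpleGraph ℕ} {ω : BRWOmega} {f : ℕ → ℕ} {I : ℕ → Set ℝ}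
    {n : ℕ} (hI : ∀ m < n, ∀ r ∈ I m, gstep G (f m) r = f (m + 1))
    (hseed : ∀ m < n, (ω (spine (m + 1))).2 ∈ I m) {m : ℕ} (hm : m ≤ n) :
    pos G (f 0) ω (spine m) = f m := by
  induction m with
  | zero => rfl
  | succ m ih =>
    change gstep G (pos G (f 0) ω (spine m)) (ω (spine (m + 1))).2 = f (m + 1)
    rw [ih (by omega)]
    exact hI m hm _ (hseed m hm)

def visitors (G : SimpleGraph ℕ) (o x : ℕ) (ω : BRWOmega) : Set (List ℕ) :=
  {v | alive ω v ∧ pos G o ω v = x}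

lemma measurableSet_infinite_visitors (G : SimpleGraph ℕ) (o x : ℕ) :
    MeasurableSet[halfSigma rootless] {ω | (visitors G o x ω).Infinite} := by
  have h : {ω | (visitors G o x ω).Infinite} =
      ⋂ t : Finset (List ℕ), ⋃ v ∈ (t : Set (List ℕ))ᶜ, {ω | v ∈ visitors G o x ω} := by
    ext ω
    simp only [Set.mem_ofPred_eq, Set.mem_iInter, Set.mem_iUnion, exists_prop]
    refine ⟨fun h t => (h.exists_notMem_finset t).imp fun v hv => hv.symm, fun h hfin => ?_⟩
    obtain ⟨v, hv, hvS⟩ := h hfin.toFinset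
    exact hv (hfin.mem_toFinset.2 hvS)
  rw [h]
  exact .iInter fun t => .biUnion (Set.to_countable _) fun v _ =>
    (measurableSet_alive_rootless v).inter (measurable_pos_rootless G o v (.singleton x))

lemma infinite_visitors_of_subtree {G : SimpleGraph ℕ} {o x : ℕ} {ω : BRWOmega} {w : List ℕ}
    (hw : alive ω w) (h : (visitors G (pos G o ω w) x (subtreeShift w ω)).Infinite) :
    (visitors G o x ω).Infinite := by
  refine (h.image (List.append_left_injective w).injOn).mono ?_
  rintro _ ⟨u, ⟨hu, hux⟩, rfl⟩
  exact ⟨(alive_subtreeShift hw u).1 hu, pos_subtreeShift G o ω w u ▸ hux⟩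

/-- With positive probability the spine carries a particle from `x` to `z`, and its subtree
then visits `x` like a walk started at `z`. -/
theorem measure_infinite_visitors_eq_zero {p : PMF ℕ} (hp0 : p 0 = 0) {G : SimpleGraph ℕ}
    (hconn : G.Connected) (hfin : ∀ x, (G.neighborSet x).Finite) {x : ℕ}
    (htr : brwLaw p {ω | VisitsInf G x ω} = 0) (z : ℕ) :
    brwLaw p {ω | (visitors G z x ω).Infinite} = 0 := by
  obtain ⟨wk⟩ := hconn.preconnected x z
  set d := wk.length
  obtain ⟨I, hImeas, hIpos, hIforce⟩ := exists_seeds_along_walk hfin wk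
  set t := (Finset.range d).image fun m => spine (m + 1)
  set C := (t : Set (List ℕ)).pi fun v => (Set.univ : Set ℕ) ×ˢ I (v.length - 1)
  set V := {ω | (visitors G z x ω).Infinite}
  have hC : MeasurableSet[halfSigma {q | q.1 ∈ t ∧ q.2 = 1}] C :=
    measurableSet_pi_halfSigma t (fun _ => hImeas _) fun v hv => ⟨Or.inr rfl, Or.inl ⟨hv, rfl⟩⟩
  have hdisj : Disjoint {q : List ℕ × Fin 2 | q.1 ∈ t ∧ q.2 = 1}
      (Prod.map (· ++ spine d) id '' rootless) := by
    refine Set.disjoint_left.2 ?_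
    rintro _ ⟨hv, h1⟩ ⟨⟨u, i⟩, hui, rfl⟩
    obtain ⟨m, hm, hmu⟩ := Finset.mem_image.1 hv
    have hlen := congrArg List.length hmu
    simp only [Prod.map_fst, List.length_append, List.length_replicate] at hlen
    have hu : u = [] := List.eq_nil_of_length_eq_zero (by simp at hm; omega)
    exact hui (by simp_all)
  have hprod : brwLaw p (C ∩ subtreeShift (spine d) ⁻¹' V) = brwLaw p C * brwLaw p V := by
    rw [(Indep_iff _ _ _).1 (indep_halfSigma p hdisj) _ _ hC
        (measurable_subtreeShift_halfSigma _ _ (measurableSet_infinite_visitors G z x)),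
      (measurePreserving_subtreeShift p _).measure_preimage
        (halfSigma_le _ _ (measurableSet_infinite_visitors G z x)).nullMeasurableSet]
  have hnull : brwLaw p (C ∩ subtreeShift (spine d) ⁻¹' V) = 0 := by
    refine measure_mono_null_ae ?_ htr
    filter_upwards [ae_offspring_pos hp0] with ω hω ⟨hωC, hωV⟩
    have hpos : pos G x ω (spine d) = z := by
      have := pos_spine_of_forced (ω := ω) hIforce (fun m hm => ?_) (le_refl d)
      · rwa [wk.getVert_zero, wk.getVert_length] at this
      simpa using (hωC _ (Finset.mem_image.2 ⟨m, Finset.mem_range.2 hm, rfl⟩)).2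
    exact infinite_visitors_of_subtree (alive_spine hω d) (hpos ▸ hωV)
  rw [hprod] at hnull
  exact (mul_eq_zero.1 hnull).resolve_left
    (brwLaw_pi_pos p t (fun _ => hImeas _) (fun _ _ => by simp) fun _ _ => hIpos _).ne'

def StaysOutside (G : SimpleGraph ℕ) (o k s : ℕ) (ω : BRWOmega) : Prop :=
  ∀ u, u ≠ [] → alive ω u → k < G.dist o (pos G s ω u)

lemma measurableSet_staysOutside (G : SimpleGraph ℕ) (o k s : ℕ) :
    MeasurableSet[halfSigma rootless] {ω | StaysOutside G o k s ω} := by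
  rw [show {ω | StaysOutside G o k s ω} =
      ⋂ u, {ω | u ≠ [] → alive ω u → k < G.dist o (pos G s ω u)} from Set.ofPred_forall _]
  exact .iInter fun u => (MeasurableSet.const _).imp ((measurableSet_alive_rootless u).imp
    (measurableSet_lt measurable_const
      ((measurable_from_top (f := G.dist o)).comp (measurable_pos_rootless G s u))))

section Transient

variable {p : PMF ℕ} {G : SimpleGraph ℕ}

lemma ae_finite_visitors_ball (hp0 : p 0 = 0) (hconn : G.Connected)
    (hfin : ∀ x, (G.neighborSet x).Finite) (htrans : ∀ x, brwLaw p {ω | VisitsInf G x ω} = 0)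
    (k : ℕ) : ∀ᵐ ω ∂brwLaw p, {v | alive ω v ∧ G.dist 0 (pos G 0 ω v) ≤ k}.Finite := by
  have hvis : ∀ᵐ ω ∂brwLaw p, ∀ x, (visitors G 0 x ω).Finite := ae_all_iff.2 fun x =>
    measure_mono_null (fun ω hω => hω)
      (measure_infinite_visitors_eq_zero hp0 hconn hfin (htrans x) 0)
  filter_upwards [hvis] with ω hω
  refine ((finite_setOf_dist_le hconn hfin 0 k).biUnion fun x _ => hω x).subset ?_
  rintro v ⟨hv, hk⟩
  exact Set.mem_biUnion (x := pos G 0 ω v) hk ⟨hv, rfl⟩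

/-- A deepest particle in the ball of radius `k` starts a subtree that stays outside it. -/
lemma exists_staysOutside_pos (hp0 : p 0 = 0) (hconn : G.Connected)
    (hfin : ∀ x, (G.neighborSet x).Finite) (htrans : ∀ x, brwLaw p {ω | VisitsInf G x ω} = 0)
    (k : ℕ) : ∃ s, G.dist 0 s ≤ k ∧ 0 < brwLaw p {ω | StaysOutside G 0 k s ω} := by
  by_contra! h
  set E := fun s => {ω | G.dist 0 s ≤ k ∧ StaysOutside G 0 k s ω}
  have hE : ∀ s, brwLaw p (E s) = 0 := fun s => by
    by_cases hs : G.dist 0 s ≤ k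
    · exact measure_mono_null (fun ω hω => hω.2) (nonpos_iff_eq_zero.1 (h s hs))
    · simp [E, hs]
  have hcover : ∀ᵐ ω ∂brwLaw p, ω ∈ ⋃ (w : List ℕ) (s : ℕ), subtreeShift w ⁻¹' E s := by
    filter_upwards [ae_finite_visitors_ball hp0 hconn hfin htrans k] with ω hω
    obtain ⟨w, ⟨hwa, hwk⟩, hmax⟩ :=
      Set.Finite.exists_maximalFor List.length _ hω ⟨[], trivial, by simp [pos]⟩
    refine Set.mem_iUnion₂.2 ⟨w, pos G 0 ω w, hwk, fun u hu ha => ?_⟩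
    rw [pos_subtreeShift]
    by_contra! hle
    have := hmax ⟨(alive_subtreeShift hwa u).1 ha, hle⟩ (by simp)
    simp only [List.length_append] at this
    exact hu (List.length_eq_zero_iff.1 (by omega))
  have hnull : brwLaw p (⋃ (w : List ℕ) (s : ℕ), subtreeShift w ⁻¹' E s) = 0 :=
    measure_iUnion_null fun w => measure_iUnion_null fun s => by
      have hEs : MeasurableSet (E s) :=
        (MeasurableSet.const _).inter (halfSigma_le _ _ (measurableSet_staysOutside G 0 k s))
      rw [(measurePreserving_subtreeShift p w).measure_preimage hEs.nullMeasurableSet]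
      exact hE s
  simpa using measure_mono_null_ae (s := Set.univ) (hcover.mono fun ω h _ => h) hnull

lemma measure_staysOutside_eq_zero_of_dist_lt (hp0 : p 0 = 0) (hconn : G.Connected)
    (hfin : ∀ x, (G.neighborSet x).Finite) {k s : ℕ} (hs : G.dist 0 s < k) :
    brwLaw p {ω | StaysOutside G 0 k s ω} = 0 := by
  refine measure_mono_null_ae ?_ (measure_empty (μ := brwLaw p))
  filter_upwards [ae_offspring_pos hp0, ae_seed_mem_Ioo p] with ω hoff hseed hω
  have hadj : G.Adj s (pos G s ω [0]) := adj_gstep hconn (hfin s) (hseed [0])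
  have := hω [0] (List.cons_ne_nil 0 []) ⟨hoff [], trivial⟩
  have := hconn.dist_triangle (u := 0) (v := s) (w := pos G s ω [0])
  rw [SimpleGraph.dist_eq_one_iff_adj.2 hadj] at this
  omega

theorem exists_staysOutside (hp0 : p 0 = 0) (hconn : G.Connected)
    (hfin : ∀ x, (G.neighborSet x).Finite) (htrans : ∀ x, brwLaw p {ω | VisitsInf G x ω} = 0)
    (k : ℕ) : ∃ s, G.dist 0 s = k ∧ 0 < brwLaw p {ω | StaysOutside G 0 k s ω} := by
  obtain ⟨s, hsk, hpos⟩ := exists_staysOutside_pos hp0 hconn hfin htrans k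
  refine ⟨s, hsk.antisymm (not_lt.1 fun hlt => ?_), hpos⟩
  exact hpos.ne' (measure_staysOutside_eq_zero_of_dist_lt hp0 hconn hfin hlt)

end Transient

def IsLineSegment (H : SimpleGraph ℕ) (k : ℕ) (x : ℕ → ℕ) : Prop :=
  (∀ i < k, H.Adj (x i) (x (i + 1))) ∧ (∀ i ≤ k, ∀ j ≤ k, i ≠ j → x i ≠ x j) ∧
    ∀ i, 1 ≤ i → i + 1 ≤ k → gdeg H (x i) = 2

lemma isLineSegment_traceGraph {G : SimpleGraph ℕ} {ω : BRWOmega} {g : ℕ → ℕ} {k : ℕ}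
    (hinj : Set.InjOn g {m | m ≤ k}) (hball : ∀ m ≤ k, G.dist 0 (g m) ≤ k)
    (hpos : ∀ v, alive ω v → v.length ≤ k → pos G 0 ω v = g v.length)
    (hfar : ∀ v, alive ω v → k < v.length → k < G.dist 0 (pos G 0 ω v))
    (hgen : ∀ m ≤ k, ∃ v, alive ω v ∧ v.length = m) :
    IsLineSegment (traceGraph G 0 ω) k g := by
  have hne : ∀ a ≤ k, ∀ b ≤ k, a ≠ b → g a ≠ g b := fun a ha b hb hab h => hab (hinj ha hb h)
  have hlevel : ∀ v, alive ω v → ∀ m ≤ k, pos G 0 ω v = g m → v.length = m := by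
    intro v hv m hm h
    by_cases hvk : v.length ≤ k
    · exact hinj hvk hm ((hpos v hv hvk).symm.trans h)
    · exact absurd (hball m hm) (not_le.2 (h ▸ hfar v hv (not_le.1 hvk)))
  have hadj : ∀ m < k, (traceGraph G 0 ω).Adj (g m) (g (m + 1)) := by
    intro m hm
    obtain ⟨v, hv, hlen⟩ := hgen (m + 1) hm
    obtain ⟨i, u, rfl⟩ := List.exists_cons_of_length_eq_add_one hlen
    simp only [List.length_cons, Nat.add_right_cancel_iff] at hlen
    refine ⟨hne _ hm.le _ hm (by omega), i, u, hv, Or.inl ⟨?_, ?_⟩⟩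
    · rw [hpos u hv.2 (by omega), hlen]
    · rw [hpos _ hv (by simp; omega), List.length_cons, hlen]
  have hnbr : ∀ m, 1 ≤ m → m < k →
      (traceGraph G 0 ω).neighborSet (g m) = {g (m - 1), g (m + 1)} := by
    intro m hm1 hmk
    ext y
    simp only [SimpleGraph.mem_neighborSet, Set.mem_insert_iff, Set.mem_singleton_iff]
    constructor
    · rintro ⟨-, i, v, hv, ⟨hvm, rfl⟩ | ⟨rfl, hvm⟩⟩
      · have := hlevel v hv.2 m hmk.le hvm
        exact Or.inr (by rw [hpos _ hv (by simp; omega), List.length_cons, this])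
      · have := hlevel _ hv m hmk.le hvm
        simp only [List.length_cons] at this
        exact Or.inl (by rw [hpos v hv.2 (by omega)]; congr 1; omega)
    · rintro (rfl | rfl)
      · simpa [Nat.sub_add_cancel hm1] using (hadj (m - 1) (by omega)).symm
      · exact hadj m hmk
  refine ⟨hadj, hne, fun m hm1 hmk => ?_⟩
  rw [gdeg, hnbr m hm1 hmk, Set.ncard_pair (hne _ (by omega) _ hmk (by omega))]

lemma finite_setOf_length_le_forall_lt (j k : ℕ) :
    {v : List ℕ | v.length ≤ k ∧ ∀ i ∈ v, i < j}.Finite := by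
  refine ((List.finite_length_le (Fin j) k).image (List.map Fin.val)).subset ?_
  rintro v ⟨hk, hj⟩
  lift v to List (Fin j) using hj
  exact ⟨v, by simpa using hk, rfl⟩

noncomputable def jaryTree (j k : ℕ) : Finset (List ℕ) :=
  (finite_setOf_length_le_forall_lt j k).toFinset

lemma mem_jaryTree {j k : ℕ} {v : List ℕ} :
    v ∈ jaryTree j k ↔ v.length ≤ k ∧ ∀ i ∈ v, i < j :=
  Set.Finite.mem_toFinset _

def stemEvent (j k : ℕ) (I : ℕ → Set ℝ) : Set BRWOmega :=
  (jaryTree j k : Set (List ℕ)).pi fun v => {n | v.length < k → n = j} ×ˢ I (v.length - 1)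

def leafEvent (G : SimpleGraph ℕ) (j k s : ℕ) : Set BRWOmega :=
  ⋂ w ∈ (jaryTree j k).filter (·.length = k), subtreeShift w ⁻¹' {ω | StaysOutside G 0 k s ω}

section Segment

variable {p : PMF ℕ} {G : SimpleGraph ℕ} {j k s : ℕ} {I : ℕ → Set ℝ}

lemma measure_stemEvent_inter_leafEvent_pos (hpj : p j ≠ 0) (hI : ∀ m, MeasurableSet (I m))
    (hIpos : ∀ m, 0 < unif01 (I m)) (hstay : 0 < brwLaw p {ω | StaysOutside G 0 k s ω}) :
    0 < brwLaw p (stemEvent j k I ∩ leafEvent G j k s) := by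
  set S₀ : Set (List ℕ × Fin 2) := {q | q.1.length < k ∨ (q.1.length = k ∧ q.2 = 1)}
  set W := (jaryTree j k).filter (·.length = k)
  set leafSupport := fun w : List ℕ => Prod.map (· ++ w) id '' rootless
  have hstem : MeasurableSet[halfSigma S₀] (stemEvent j k I) := by
    refine measurableSet_pi_halfSigma _ (fun _ => hI _) fun v hv => ?_
    have hvk := (mem_jaryTree.1 hv).1
    refine ⟨?_, Or.inl (by simp [S₀]; omega)⟩
    by_cases h : v.length < k
    · exact Or.inl (Or.inl h)
    · exact Or.inr (by ext n; simp [h])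
  have hleaf : ∀ w ∈ W, MeasurableSet[halfSigma (leafSupport w)]
      (subtreeShift w ⁻¹' {ω | StaysOutside G 0 k s ω}) := fun w _ =>
    measurable_subtreeShift_halfSigma w rootless (measurableSet_staysOutside G 0 k s)
  have hpd : (W : Set (List ℕ)).PairwiseDisjoint leafSupport := by
    intro w hw w' hw' hne
    refine Set.disjoint_left.2 ?_
    rintro _ ⟨⟨u, i⟩, -, rfl⟩ ⟨⟨u', i'⟩, -, h⟩
    have hlen : w'.length = w.length := by
      simp only [W, Finset.coe_filter, Set.mem_ofPred_eq] at hw hw'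
      rw [hw.2, hw'.2]
    exact hne (List.append_inj' (congrArg Prod.fst h) hlen).2.symm
  have hdisj : Disjoint S₀ (⋃ w ∈ W, leafSupport w) := by
    refine Set.disjoint_iUnion₂_right.2 fun w hw => Set.disjoint_left.2 ?_
    rintro _ hq ⟨⟨u, i⟩, hui, rfl⟩
    have hwk := (Finset.mem_filter.1 hw).2
    simp only [S₀, Set.mem_ofPred_eq, Prod.map_fst, Prod.map_snd, id, List.length_append] at hq
    have hu : u = [] := List.eq_nil_of_length_eq_zero (by omega)
    exact hui (by simp_all)
  have hleafMeas : MeasurableSet[halfSigma (⋃ w ∈ W, leafSupport w)] (leafEvent G j k s) :=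
    Finset.measurableSet_biInter W fun w hw =>
      halfSigma_mono (Set.subset_biUnion_of_mem (u := leafSupport) hw) _ (hleaf w hw)
  have hstemPos : 0 < brwLaw p (stemEvent j k I) := by
    refine brwLaw_pi_pos p _ (fun _ => hI _) (fun v _ => ?_) fun v _ => hIpos _
    refine lt_of_lt_of_le ?_ (measure_mono (s := {j}) fun n hn => fun _ => hn)
    rw [PMF.toMeasure_apply_singleton _ _ (measurableSet_singleton j)]
    exact pos_iff_ne_zero.2 hpj
  rw [(Indep_iff _ _ _).1 (indep_halfSigma p hdisj) _ _ hstem hleafMeas, leafEvent,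
    measure_biInter_halfSigma p hpd hleaf]
  refine ENNReal.mul_pos hstemPos.ne' (CanonicallyOrderedAdd.prod_pos.2 fun w _ => ?_).ne'
  rwa [(measurePreserving_subtreeShift p w).measure_preimage
    (halfSigma_le _ _ (measurableSet_staysOutside G 0 k s)).nullMeasurableSet]

lemma isLineSegment_of_mem_stemEvent_inter_leafEvent {ω : BRWOmega} {g : ℕ → ℕ} (hj : 0 < j)
    (hg0 : g 0 = 0) (hgk : g k = s) (hI : ∀ m < k, ∀ r ∈ I m, gstep G (g m) r = g (m + 1))
    (hinj : Set.InjOn g {m | m ≤ k}) (hball : ∀ m ≤ k, G.dist 0 (g m) ≤ k)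
    (hω : ω ∈ stemEvent j k I ∩ leafEvent G j k s) : IsLineSegment (traceGraph G 0 ω) k g := by
  obtain ⟨hstem, hleaf⟩ := hω
  have halive : ∀ v : List ℕ, v.length ≤ k → (alive ω v ↔ ∀ i ∈ v, i < j) := by
    intro v hv
    induction v with
    | nil => simp [alive]
    | cons i u ih =>
      simp only [List.length_cons] at hv
      have hoff : alive ω u → offspring ω u = j := fun h =>
        (hstem u (mem_jaryTree.2 ⟨by omega, (ih (by omega)).1 h⟩)).1 (by omega)
      rw [List.forall_mem_cons, ← ih (by omega)]
      constructor
      · rintro ⟨hi, hu⟩; exact ⟨hoff hu ▸ hi, hu⟩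
      · rintro ⟨hi, hu⟩; exact ⟨(hoff hu).symm ▸ hi, hu⟩
  have hmem : ∀ v, alive ω v → v.length ≤ k → v ∈ jaryTree j k := fun v hv hvk =>
    mem_jaryTree.2 ⟨hvk, (halive v hvk).1 hv⟩
  have hpos : ∀ v, alive ω v → v.length ≤ k → pos G 0 ω v = g v.length := fun v hv hvk => by
    rw [← hg0]
    refine pos_eq_of_forced hI (U := jaryTree j k) (fun i u hu => ?_) (fun i u hu => ?_)
      (hmem v hv hvk) hvk
    · obtain ⟨hl, he⟩ := mem_jaryTree.1 hu
      exact mem_jaryTree.2 ⟨by simp at hl; omega, fun i' hi' => he i' (List.mem_cons_of_mem _ hi')⟩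
    · simpa using (hstem _ hu).2
  have hfar : ∀ v, alive ω v → k < v.length → k < G.dist 0 (pos G 0 ω v) := by
    intro v hv hvk
    set w := v.drop (v.length - k)
    set u := v.take (v.length - k)
    have huw : u ++ w = v := List.take_append_drop _ v
    have hwk : w.length = k := by simp [w]; omega
    have hu : u ≠ [] := fun h => by
      have : u.length = v.length - k := by simp [u]
      simp [h] at this; omega
    have hw : alive ω w := alive_of_alive_append (huw ▸ hv)
    have hstay := Set.mem_iInter₂.1 hleaf w (Finset.mem_filter.2 ⟨hmem w hw hwk.le, hwk⟩) u hu
      ((alive_subtreeShift hw u).2 (huw ▸ hv))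
    rw [← hgk, ← hwk, ← hpos w hw hwk.le, pos_subtreeShift, huw] at hstay
    rwa [hwk] at hstay
  refine isLineSegment_traceGraph hinj hball hpos hfar fun m hm => ⟨spine m, ?_, by simp⟩
  exact (halive _ (by simpa using hm)).2 fun i hi => by simp_all [List.eq_of_mem_replicate hi]

end Segment

theorem trace_contains_line_segment_pos_prob_general
    (G : SimpleGraph ℕ) (hbd : GoodGraph G)
    (p : PMF ℕ) (hp0 : p 0 = 0)
    (P : Measure BRWOmega)
    (hP : IsProductWith (fun _ : List ℕ => coordLaw p) P)
    (htrans : ∀ x : ℕ, P {ω | VisitsInf G x ω} = 0)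
    (k : ℕ) :
    0 < P {ω | ∃ x : ℕ → ℕ,
      (∀ i < k, (traceGraph G 0 ω).Adj (x i) (x (i + 1))) ∧
      (∀ i ≤ k, ∀ j ≤ k, i ≠ j → x i ≠ x j) ∧
      ∀ i, 1 ≤ i → i + 1 ≤ k → gdeg (traceGraph G 0 ω) (x i) = 2} := by
  obtain ⟨hconn, hfin, -⟩ := hbd
  rw [hP.eq_infinitePi] at htrans ⊢
  obtain ⟨j, hj⟩ := p.support_nonempty
  have hj0 : 0 < j := Nat.pos_of_ne_zero fun h => hj (h ▸ hp0)
  obtain ⟨s, hsk, hstay⟩ := exists_staysOutside hp0 hconn hfin htrans k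
  obtain ⟨γ, hγ⟩ := hconn.exists_walk_length_eq_dist 0 s
  obtain ⟨I, hImeas, hIpos, hIforce⟩ := exists_seeds_along_walk hfin γ
  rw [hsk] at hγ
  refine (measure_stemEvent_inter_leafEvent_pos hj hImeas hIpos hstay).trans_le
    (measure_mono fun ω hω => ⟨γ.getVert, ?_⟩)
  refine isLineSegment_of_mem_stemEvent_inter_leafEvent hj0 γ.getVert_zero
    (hγ ▸ γ.getVert_length) (hγ ▸ hIforce) ?_ (fun m _ => ?_) hω
  · exact hγ ▸ (γ.isPath_of_length_eq_dist (hγ.trans hsk.symm)).getVert_injOn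
  · exact (SimpleGraph.dist_le (γ.take m)).trans (by simp [γ.take_length, hγ])

/-- For the trace of a transient branching random walk on a (connected)
graph `G` of bounded degree: for every `k ≥ 1`, with positive probability the trace
contains a line segment of length `k`, i.e. a path `x₀, …, x_k` whose interior vertices
have degree `2` in the trace. -/
theorem trace_contains_line_segment_pos_prob
    (G : SimpleGraph ℕ) (hconn : G.Connected) (hbd : GoodGraph G)
    (p : PMF ℕ) (hp0 : p 0 = 0) (hp1 : p 1 < 1)
    (P : Measure BRWOmega)
    (hP : IsProductWith (fun _ : List ℕ => coordLaw p) P)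
    (htrans : ∀ x : ℕ, P {ω | VisitsInf G x ω} = 0)
    (k : ℕ) (hk : 1 ≤ k) :
    0 < P {ω | ∃ x : ℕ → ℕ,
      (∀ i < k, (traceGraph G 0 ω).Adj (x i) (x (i + 1))) ∧
      (∀ i ≤ k, ∀ j ≤ k, i ≠ j → x i ≠ x j) ∧
      ∀ i, 1 ≤ i → i + 1 ≤ k → gdeg (traceGraph G 0 ω) (x i) = 2} :=
  trace_contains_line_segment_pos_prob_general G hbd p hp0 P hP htrans k
end

section
/- Let G be a locally finite graph with finitely many ends ω_1, …, ω_k, all of which are thin. Then there exists a descending sequence of cuts (C_n) with ∩_n C_n = ∅ separating any fixed root from infinity, such that |∂C_n| ≤ Σ_{i=1}^k t(ω_i) for all n; in particular the root is separated from infinity by vertex sets of uniformly bounded size at arbitrarily large distance. -/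
/-!
Each thin end `ωᵢ` comes with cuts `Dᵢ n` of boundary at most `t(ωᵢ)` shrinking to nothing.
Their unions `C n = ⋃ᵢ Dᵢ n` are cuts with boundary at most `∑ᵢ t(ωᵢ)`, contain every end, and
still shrink to nothing because there are only finitely many ends. Dropping finitely many terms
makes `C n` avoid the root, so a ray from the root, which must eventually enter `C n`, crosses its
boundary. In a locally finite connected graph balls are finite, so far enough out the boundaries
also avoid any given ball.
-/

/-- `r` is a ray in `H`: an infinite self-avoiding path. -/
structure IsRay (H : SimpleGraph ℕ) (r : ℕ → ℕ) : Prop where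
  adj : ∀ n, H.Adj (r n) (r (n + 1))
  inj : Function.Injective r

/-- Two rays cannot be separated by any finite set of vertices
(they belong to the same end). -/
def RayConn (H : SimpleGraph ℕ) (r s : ℕ → ℕ) : Prop :=
  ∀ F : Set ℕ, F.Finite → ∃ m n, ∃ W : H.Walk (r m) (s n), ∀ z ∈ W.support, z ∉ F

/-- Interior vertex boundary of a vertex set. -/
def vBoundary (H : SimpleGraph ℕ) (C : Set ℕ) : Set ℕ :=
  {x | x ∈ C ∧ ∃ y, y ∉ C ∧ H.Adj x y}

/-- A cut: a vertex set with finite boundary. -/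
def IsCut (H : SimpleGraph ℕ) (C : Set ℕ) : Prop := (vBoundary H C).Finite

/-- A ray lies in `C`: all but finitely many of its vertices are in `C`. -/
def RayLiesIn (r : ℕ → ℕ) (C : Set ℕ) : Prop := {n | r n ∉ C}.Finite

/-- The end of the ray `r` lies in `C`: every ray equivalent to `r` lies in `C`. -/
def EndLiesIn (H : SimpleGraph ℕ) (r : ℕ → ℕ) (C : Set ℕ) : Prop :=
  ∀ s, IsRay H s → RayConn H r s → RayLiesIn s C

/-- Thickness of the end of the ray `r`: the smallest `t ∈ ℕ∞` admitting a descending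
sequence of cuts containing the end, with boundaries of size `≤ t` and empty
intersection. -/
noncomputable def endThickness (H : SimpleGraph ℕ) (r : ℕ → ℕ) : ℕ∞ :=
  sInf {t : ℕ∞ | ∃ C : ℕ → Set ℕ, (∀ n, C (n + 1) ⊆ C n) ∧ (∀ n, IsCut H (C n)) ∧
    (∀ n, EndLiesIn H r (C n)) ∧ (∀ n, ((vBoundary H (C n)).encard : ℕ∞) ≤ t) ∧
    (⋂ n, C n) = ∅}

open Filter Set

namespace SimpleGraph

variable {V : Type*} {H : SimpleGraph V}

lemma finite_setOf_walk_length_le (hlf : ∀ x, (H.neighborSet x).Finite) (o : V) (n : ℕ) :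
    {x | ∃ w : H.Walk x o, w.length ≤ n}.Finite := by
  induction n with
  | zero =>
    refine (finite_singleton o).subset ?_
    rintro x ⟨w, hw⟩
    exact Walk.eq_of_length_eq_zero (Nat.le_zero.1 hw)
  | succ n ih =>
    refine (ih.union (ih.biUnion fun y _ => hlf y)).subset ?_
    rintro x ⟨w, hw⟩
    cases w with
    | nil => exact Or.inl ⟨Walk.nil, Nat.zero_le n⟩
    | cons h p =>
      rw [Walk.length_cons] at hw
      exact Or.inr (mem_biUnion ⟨p, by omega⟩ h.symm)

lemma Connected.finite_setOf_dist_lt (hconn : H.Connected)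
    (hlf : ∀ x, (H.neighborSet x).Finite) (o : V) (n : ℕ) :
    {x | H.dist o x < n}.Finite := by
  refine (finite_setOf_walk_length_le hlf o n).subset fun x hx => ?_
  obtain ⟨w, hw⟩ := hconn.exists_walk_length_eq_dist x o
  exact ⟨w, by rw [hw, dist_comm]; exact hx.le⟩

end SimpleGraph

lemma Antitone.eventually_forall_notMem_of_iInter_eq_empty {α : Type*} {C : ℕ → Set α}
    (hC : Antitone C) (h : ⋂ n, C n = ∅) {F : Set α} (hF : F.Finite) :
    ∀ᶠ n in atTop, ∀ x ∈ F, x ∉ C n := by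
  refine (eventually_all_finite hF).2 fun x _ => ?_
  obtain ⟨n, hn⟩ : ∃ n, x ∉ C n := by
    simpa [h] using (mem_iInter (s := C) (x := x)).not
  exact eventually_atTop.2 ⟨n, fun m hm hx => hn (hC hm hx)⟩

section Ends

variable {H : SimpleGraph ℕ}

lemma vBoundary_iUnion_subset {ι : Type*} (S : ι → Set ℕ) :
    vBoundary H (⋃ i, S i) ⊆ ⋃ i, vBoundary H (S i) := by
  rintro x ⟨hx, y, hy, hxy⟩
  obtain ⟨i, hi⟩ := mem_iUnion.1 hx
  exact mem_iUnion.2 ⟨i, hi, y, fun hyi => hy (mem_iUnion_of_mem i hyi), hxy⟩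

lemma exists_mem_vBoundary_of_adj {s : ℕ → ℕ} (hadj : ∀ n, H.Adj (s n) (s (n + 1)))
    {C : Set ℕ} (h0 : s 0 ∉ C) {m : ℕ} (hm : s m ∈ C) : ∃ j, s j ∈ vBoundary H C := by
  induction m with
  | zero => exact absurd hm h0
  | succ m ih =>
    by_cases hprev : s m ∈ C
    · exact ih hprev
    · exact ⟨m + 1, hm, s m, hprev, (hadj m).symm⟩

lemma RayLiesIn.mono {r : ℕ → ℕ} {C D : Set ℕ} (h : RayLiesIn r C) (hCD : C ⊆ D) :
    RayLiesIn r D :=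
  h.subset fun _ hn hD => hn (hCD hD)

lemma RayLiesIn.exists_mem {r : ℕ → ℕ} {C : Set ℕ} (h : RayLiesIn r C) : ∃ m, r m ∈ C := by
  obtain ⟨m, hm⟩ := h.infinite_compl.nonempty
  exact ⟨m, not_not.1 hm⟩

lemma exists_cuts_of_endThickness_lt_top {r : ℕ → ℕ} (h : endThickness H r < ⊤) :
    ∃ C : ℕ → Set ℕ, (∀ n, C (n + 1) ⊆ C n) ∧ (∀ n, IsCut H (C n)) ∧
      (∀ n, EndLiesIn H r (C n)) ∧ (∀ n, (vBoundary H (C n)).encard ≤ endThickness H r) ∧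
      ⋂ n, C n = ∅ := by
  obtain ⟨t, ht, -⟩ := sInf_lt_iff.1 h
  exact csInf_mem ⟨t, ht⟩

lemma exists_antitone_cuts_containing_ends {ι : Type*} [Fintype ι] {R : ι → ℕ → ℕ}
    (hthin : ∀ i, endThickness H (R i) < ⊤) :
    ∃ C : ℕ → Set ℕ, Antitone C ∧ (∀ n, IsCut H (C n)) ∧ (∀ i n, EndLiesIn H (R i) (C n)) ∧
      (∀ n, (vBoundary H (C n)).encard ≤ ∑ i, endThickness H (R i)) ∧ ⋂ n, C n = ∅ := by
  choose D hdesc hcut hends hbound hempty using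
    fun i => exists_cuts_of_endThickness_lt_top (hthin i)
  have hanti : ∀ i, Antitone (D i) := fun i => antitone_nat_of_succ_le (hdesc i)
  refine ⟨fun n => ⋃ i, D i n, fun a b hab => iUnion_mono fun i => hanti i hab,
    fun n => (finite_iUnion fun i => hcut i n).subset (vBoundary_iUnion_subset _),
    fun i n s hs hrs => (hends i n s hs hrs).mono (subset_iUnion (D · n) i), fun n => ?_, ?_⟩
  · calc (vBoundary H (⋃ i, D i n)).encard
        ≤ (⋃ i, vBoundary H (D i n)).encard := encard_le_encard (vBoundary_iUnion_subset _)
      _ ≤ ∑ i, (vBoundary H (D i n)).encard := encard_iUnion_le_of_fintype _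
      _ ≤ ∑ i, endThickness H (R i) := Finset.sum_le_sum fun i _ => hbound i n
  · rw [iInter_iUnion_of_antitone hanti]
    simp [hempty]

end Ends

theorem finitely_many_thin_ends_bounded_cuts_general
    (H : SimpleGraph ℕ) (hconn : H.Connected) (hlf : ∀ x, (H.neighborSet x).Finite)
    (o : ℕ) (k : ℕ) (R : Fin k → ℕ → ℕ)
    (hall : ∀ s : ℕ → ℕ, IsRay H s → ∃ i, RayConn H (R i) s)
    (hthin : ∀ i, endThickness H (R i) < ⊤) :
    (∃ C : ℕ → Set ℕ, (∀ n, C (n + 1) ⊆ C n) ∧ (∀ n, IsCut H (C n)) ∧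
      (⋂ n, C n) = ∅ ∧
      (∀ n, ((vBoundary H (C n)).encard : ℕ∞) ≤ ∑ i, endThickness H (R i)) ∧
      ∀ n, ∀ s : ℕ → ℕ, IsRay H s → s 0 = o → ∃ m, s m ∈ vBoundary H (C n)) ∧
    ∀ n : ℕ, ∃ F : Set ℕ, F.Finite ∧ (F.encard : ℕ∞) ≤ ∑ i, endThickness H (R i) ∧
      (∀ x ∈ F, n ≤ H.dist o x) ∧
      ∀ s : ℕ → ℕ, IsRay H s → s 0 = o → ∃ m, s m ∈ F := by
  obtain ⟨D, hanti, hcut, hends, hbound, hempty⟩ := exists_antitone_cuts_containing_ends hthin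
  obtain ⟨n₀, hn₀⟩ := eventually_atTop.1
    (hanti.eventually_forall_notMem_of_iInter_eq_empty hempty (finite_singleton o))
  set C : ℕ → Set ℕ := fun n => D (n + n₀)
  have hCanti : Antitone C := fun a b hab => hanti (by omega)
  have hCempty : ⋂ n, C n = ∅ := (hanti.iInter_nat_add n₀).trans hempty
  have hsep : ∀ n, ∀ s : ℕ → ℕ, IsRay H s → s 0 = o → ∃ m, s m ∈ vBoundary H (C n) := by
    intro n s hs hs0
    obtain ⟨i, hi⟩ := hall s hs
    obtain ⟨m, hm⟩ := (hends i (n + n₀) s hs hi).exists_mem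
    exact exists_mem_vBoundary_of_adj hs.adj (hs0 ▸ hn₀ (n + n₀) (by omega) o rfl) hm
  refine ⟨⟨C, fun n => hCanti n.le_succ, fun n => hcut _, hCempty,
    fun n => hbound _, hsep⟩, fun n => ?_⟩
  obtain ⟨M, hM⟩ := (hCanti.eventually_forall_notMem_of_iInter_eq_empty hCempty
    (hconn.finite_setOf_dist_lt hlf o n)).exists
  exact ⟨vBoundary H (C M), hcut _, hbound _, fun x hx => not_lt.1 fun hxn => hM x hxn hx.1,
    hsep M⟩

/-- Let `H` be a locally finite (connected) graph whose ends are exactly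
the (pairwise inequivalent) ends of the rays `R 0, …, R (k-1)`, all thin. Then there is a
descending sequence of cuts `(C n)` with empty intersection, boundaries of size at most
`∑ᵢ t(ωᵢ)`, separating any fixed root `o` from infinity; in particular the root is
separated from infinity by finite vertex sets of uniformly bounded size at arbitrarily
large distance. -/
theorem finitely_many_thin_ends_bounded_cuts
    (H : SimpleGraph ℕ) (hconn : H.Connected) (hlf : ∀ x, (H.neighborSet x).Finite)
    (o : ℕ) (k : ℕ) (R : Fin k → ℕ → ℕ)
    (hray : ∀ i, IsRay H (R i))
    (hdistinct : Pairwise fun i j => ¬ RayConn H (R i) (R j))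
    (hall : ∀ s : ℕ → ℕ, IsRay H s → ∃ i, RayConn H (R i) s)
    (hthin : ∀ i, endThickness H (R i) < ⊤) :
    (∃ C : ℕ → Set ℕ, (∀ n, C (n + 1) ⊆ C n) ∧ (∀ n, IsCut H (C n)) ∧
      (⋂ n, C n) = ∅ ∧
      (∀ n, ((vBoundary H (C n)).encard : ℕ∞) ≤ ∑ i, endThickness H (R i)) ∧
      ∀ n, ∀ s : ℕ → ℕ, IsRay H s → s 0 = o → ∃ m, s m ∈ vBoundary H (C n)) ∧
    ∀ n : ℕ, ∃ F : Set ℕ, F.Finite ∧ (F.encard : ℕ∞) ≤ ∑ i, endThickness H (R i) ∧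
      (∀ x ∈ F, n ≤ H.dist o x) ∧
      ∀ s : ℕ → ℕ, IsRay H s → s 0 = o → ∃ m, s m ∈ F :=
  finitely_many_thin_ends_bounded_cuts_general H hconn hlf o k R hall hthin
end
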